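/- Let x = (x₁,x₂) ∈ ℝ² with x ≠ 0 and y = (y₁,y₂,y₃) ∈ ℝ³ satisfy R(x,y) := x₂²y₁ + x₁²y₃ − x₁x₂y₂ = 0 and Δ(y) := y₂² − 4y₁y₃ ≠ 0, and let L be a real Lie algebra with a basis e₁,…,e₆ whose brackets are those of g(x,y). Then: (i) the center Z of L is a 3-dimensional ideal; (ii) the derived algebra D = [L,L] is a 3-dimensional Lie subalgebra isomorphic, as a real Lie algebra, to so(3,ℝ) (real skew-symmetric 3×3 matrices); (iii) Z ∩ D = 0 and Z + D = L, so L is isomorphic to the direct sum so(3) ⊕ ℝ³ with ℝ³ central. -/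

import Mathlib

noncomputable section

/-- `Wpair i j v w = vᵢwⱼ − vⱼwᵢ`, the evaluation of `eⁱ∧eʲ` on `(v,w)`. -/
def Wpair (i j : Fin 6) (v w : Fin 6 → ℝ) : ℝ := v i * w j - v j * w i

/-- The antisymmetric bilinear bracket of `g(x,y)` on `ℝ⁶`, determined (in 1-based index
notation) by `[e₃,e₅] = (x₁y₂−x₂y₁)e₁ − x₁y₁e₂`, `[e₃,e₆] = [e₄,e₅] = x₁y₃e₁ − x₂y₁e₂`,
`[e₄,e₆] = x₂y₃e₁ + (x₁y₃−x₂y₂)e₂`, `[e₁,e₅] = (x₂y₁−x₁y₂)e₃ + x₁y₁e₄`,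
`[e₁,e₆] = [e₂,e₅] = −x₁y₃e₃ + x₂y₁e₄`, `[e₂,e₆] = −x₂y₃e₃ + (x₂y₂−x₁y₃)e₄`,
`[e₁,e₃] = (x₁y₂−x₂y₁)e₅ − x₁y₁e₆`, `[e₁,e₄] = [e₂,e₃] = x₁y₃e₅ − x₂y₁e₆`,
`[e₂,e₄] = x₂y₃e₅ + (x₁y₃−x₂y₂)e₆`, `[e₁,e₂] = [e₃,e₄] = [e₅,e₆] = 0`. -/
def brXY (x : Fin 2 → ℝ) (y : Fin 3 → ℝ) (v w : Fin 6 → ℝ) : Fin 6 → ℝ :=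
  ![(x 0 * y 1 - x 1 * y 0) * Wpair 2 4 v w + x 0 * y 2 * (Wpair 2 5 v w + Wpair 3 4 v w) +
      x 1 * y 2 * Wpair 3 5 v w,
    -(x 0 * y 0 * Wpair 2 4 v w) - x 1 * y 0 * (Wpair 2 5 v w + Wpair 3 4 v w) +
      (x 0 * y 2 - x 1 * y 1) * Wpair 3 5 v w,
    (x 1 * y 0 - x 0 * y 1) * Wpair 0 4 v w - x 0 * y 2 * (Wpair 0 5 v w + Wpair 1 4 v w) -
      x 1 * y 2 * Wpair 1 5 v w,
    x 0 * y 0 * Wpair 0 4 v w + x 1 * y 0 * (Wpair 0 5 v w + Wpair 1 4 v w) +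
      (x 1 * y 1 - x 0 * y 2) * Wpair 1 5 v w,
    (x 0 * y 1 - x 1 * y 0) * Wpair 0 2 v w + x 0 * y 2 * (Wpair 0 3 v w + Wpair 1 2 v w) +
      x 1 * y 2 * Wpair 1 3 v w,
    -(x 0 * y 0 * Wpair 0 2 v w) - x 1 * y 0 * (Wpair 0 3 v w + Wpair 1 2 v w) +
      (x 0 * y 2 - x 1 * y 1) * Wpair 1 3 v w]

/-- A basis `e` of a real Lie algebra `L` realizes the brackets of `g(x,y)` if the bracket of
any two basis vectors is given by the structure constants of `brXY x y`. -/
def RealizesGXY {L : Type*} [LieRing L] [LieAlgebra ℝ L] (x : Fin 2 → ℝ) (y : Fin 3 → ℝ)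
    (e : Module.Basis (Fin 6) ℝ L) : Prop :=
  ∀ i j : Fin 6, ⁅e i, e j⁆ = ∑ k, brXY x y (Pi.single i 1) (Pi.single j 1) k • e k

/-!
Identify `ℝ⁶` with `ℝ² ⊗ ℝ³` (the coordinates of `a ⊗ u` are `aⱼ uₖ` at index `2k + j`). Then the
bracket of `g(x,y)` reads `[a ⊗ u, b ⊗ v] = ab ⊗ (u × v)`, where `ab` is a commutative bilinear
product on `ℝ²` depending on `x, y`. For `z = (−x₂, x₁)` one finds `zb = R(x,y) b`, so `R = 0`
makes `z` annihilate the whole algebra `ℝ²`. Moreover `xx = μx + νz` with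
`μ² = |x|⁴ Δ(y) − 4νR(x,y)`, so `μ ≠ 0` and `d = μ⁻¹x + νμ⁻²z` is an idempotent independent of
`z`. Hence `L = z ⊗ ℝ³ ⊕ d ⊗ ℝ³`, where the first summand is central and `u ↦ d ⊗ u` embeds
`(ℝ³, ×) ≅ so(3)`. Since `(ℝ³, ×)` is perfect and centerless, the two summands are exactly the
center and the derived algebra.
-/

open Matrix LieAlgebra LieAlgebra.Orthogonal

section CrossProduct
variable {R : Type*} [CommRing R]

theorem eq_cross_add_cross_add_cross (u : Fin 3 → R) :
    u = ![0, u 0, 0] ⨯₃ ![0, 0, 1] + ![0, 0, u 1] ⨯₃ ![1, 0, 0] + ![u 2, 0, 0] ⨯₃ ![0, 1, 0] := by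
  ext i; fin_cases i <;> simp [cross_apply]

theorem eq_zero_of_forall_cross_eq_zero {u : Fin 3 → R} (h : ∀ v, v ⨯₃ u = 0) : u = 0 := by
  have h0 := h ![1, 0, 0]
  have h1 := h ![0, 1, 0]
  simp only [cross_apply, funext_iff, Fin.forall_fin_succ] at h0 h1
  ext i; fin_cases i <;> simp_all

end CrossProduct

section SoThree
variable {K : Type*} [CommRing K] [NoZeroDivisors K] [CharZero K]

def so3EquivCross : so (Fin 3) K ≃ₗ[K] (Fin 3 → K) where
  toFun M := ![M.1 2 1, M.1 0 2, M.1 1 0]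
  invFun u := ⟨!![0, -u 2, u 1; u 2, 0, -u 0; -u 1, u 0, 0], by
    rw [mem_so]; ext i j; fin_cases i <;> fin_cases j <;> simp⟩
  map_add' M N := by ext i; fin_cases i <;> simp
  map_smul' c M := by ext i; fin_cases i <;> simp
  left_inv M := by
    have hskew : ∀ i j, M.1 j i = -M.1 i j := fun i j => by
      simpa using congrFun (congrFun ((mem_so _ _ _).mp M.2) i) j
    have hdiag : ∀ i, M.1 i i = 0 := fun i => self_eq_neg.mp (hskew i i)
    ext i j
    fin_cases i <;> fin_cases j <;> simp [hskew 1 0, hskew 2 1, hskew 0 2, hdiag]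
  right_inv u := by ext i; fin_cases i <;> simp

theorem so3EquivCross_lie (M N : so (Fin 3) K) :
    so3EquivCross ⁅M, N⁆ = so3EquivCross M ⨯₃ so3EquivCross N := by
  rw [← so3EquivCross.symm_apply_apply M, ← so3EquivCross.symm_apply_apply N]
  simp only [LinearEquiv.apply_symm_apply]
  ext i
  fin_cases i
  all_goals simp [so3EquivCross, Ring.lie_def, cross_apply]
  all_goals ring

theorem nonempty_lieEquiv_so_of_range_eq {L : Type*} [LieRing L] [LieAlgebra K L]
    {ι : (Fin 3 → K) →ₗ[K] L} (hι : ∀ u v, ⁅ι u, ι v⁆ = ι (u ⨯₃ v))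
    (hinj : Function.Injective ι) (I : LieIdeal K L) (hI : I.toSubmodule = LinearMap.range ι) :
    Nonempty (I ≃ₗ⁅K⁆ so (Fin 3) K) := by
  have hmem : ∀ u, ι u ∈ I := fun u => by
    rw [← LieSubmodule.mem_toSubmodule, hI]; exact LinearMap.mem_range_self ι u
  let f : so (Fin 3) K →ₗ⁅K⁆ I :=
    { toFun := fun M => ⟨ι (so3EquivCross M), hmem _⟩
      map_add' := fun M N => by ext; simp
      map_smul' := fun c M => by ext; simp
      map_lie' := fun {M N} => by ext; simp [so3EquivCross_lie, hι] }
  have hf : Function.Bijective f := by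
    refine ⟨fun M N h => so3EquivCross.injective (hinj (congrArg Subtype.val h)), fun a => ?_⟩
    obtain ⟨u, hu⟩ : (a : L) ∈ LinearMap.range ι := hI ▸ a.2
    exact ⟨so3EquivCross.symm u, Subtype.ext (by simp [f, hu])⟩
  exact ⟨(LieEquiv.ofBijective f hf).symm⟩

end SoThree

section Decomposition
variable {R L : Type*} [CommRing R] [LieRing L] [LieAlgebra R L]
  {Z D : Submodule R L} {ι : (Fin 3 → R) →ₗ[R] L}

theorem le_center_of_codisjoint (hZD : Codisjoint Z D) (hZ : ∀ a ∈ Z, ∀ b ∈ Z, ⁅a, b⁆ = 0)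
    (hD : ∀ a ∈ Z, ∀ b ∈ D, ⁅a, b⁆ = 0) : Z ≤ (center R L).toSubmodule := by
  intro a ha
  rw [LieSubmodule.mem_toSubmodule, LieModule.mem_maxTrivSubmodule]
  intro l
  obtain ⟨z, hz, d, hd, rfl⟩ := Submodule.mem_sup.mp (hZD.eq_top ▸ Submodule.mem_top : l ∈ Z ⊔ D)
  rw [add_lie, ← lie_skew, ← lie_skew d, hZ a ha z hz, hD a ha d hd, neg_zero, add_zero]

variable (hZ : Z ≤ (center R L).toSubmodule) (hι : ∀ u v, ⁅ι u, ι v⁆ = ι (u ⨯₃ v))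
include hZ hι

theorem derived_toSubmodule_eq_range (hZD : Codisjoint Z (LinearMap.range ι)) :
    (⁅(⊤ : LieIdeal R L), ⊤⁆ : LieIdeal R L).toSubmodule = LinearMap.range ι := by
  have hdecomp : ∀ l : L, ∃ z ∈ Z, ∃ u, z + ι u = l := fun l => by
    obtain ⟨z, hz, _, ⟨u, rfl⟩, h⟩ :=
      Submodule.mem_sup.mp (hZD.eq_top ▸ Submodule.mem_top : l ∈ Z ⊔ LinearMap.range ι)
    exact ⟨z, hz, u, h⟩
  have hcentral : ∀ z ∈ Z, ∀ l : L, ⁅z, l⁆ = 0 := fun z hz l => by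
    rw [← lie_skew, (LieModule.mem_maxTrivSubmodule R L L z).mp (hZ hz), neg_zero]
  apply le_antisymm
  · rw [LieSubmodule.lieIdeal_oper_eq_linear_span', Submodule.span_le]
    rintro _ ⟨a, -, b, -, rfl⟩
    obtain ⟨z, hz, u, rfl⟩ := hdecomp a
    obtain ⟨z', hz', v, rfl⟩ := hdecomp b
    rw [add_lie, hcentral z hz, zero_add, lie_add, ← lie_skew, hcentral z' hz', neg_zero,
      zero_add, hι]
    exact LinearMap.mem_range_self _ _
  · rintro _ ⟨u, rfl⟩
    rw [eq_cross_add_cross_add_cross u, map_add, map_add, ← hι, ← hι, ← hι]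
    refine add_mem (add_mem ?_ ?_) ?_ <;>
      exact LieSubmodule.lie_mem_lie (LieSubmodule.mem_top _) (LieSubmodule.mem_top _)

theorem center_toSubmodule_eq (hZD : Codisjoint Z (LinearMap.range ι))
    (hinj : Function.Injective ι) : (center R L).toSubmodule = Z := by
  refine le_antisymm (fun c hc => ?_) hZ
  obtain ⟨z, hz, _, ⟨u, rfl⟩, rfl⟩ :=
    Submodule.mem_sup.mp (hZD.eq_top ▸ Submodule.mem_top : c ∈ Z ⊔ LinearMap.range ι)
  have hu : ι u ∈ (center R L).toSubmodule := by
    simpa using sub_mem hc (hZ hz)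
  rw [LieSubmodule.mem_toSubmodule, LieModule.mem_maxTrivSubmodule] at hu
  have : u = 0 := eq_zero_of_forall_cross_eq_zero fun v => hinj (by rw [← hι, hu, map_zero])
  simpa [this] using hz

end Decomposition

theorem bilin_idempotent_of_annihilator {K M : Type*} [Field K] [AddCommGroup M] [Module K M]
    (B : M →ₗ[K] M →ₗ[K] M) {x z : M} {μ ν : K} (hμ : μ ≠ 0) (hzl : B z = 0)
    (hzr : ∀ m, B m z = 0) (hx : B x x = μ • x + ν • z) :
    B (μ⁻¹ • x + (ν / μ ^ 2) • z) (μ⁻¹ • x + (ν / μ ^ 2) • z) = μ⁻¹ • x + (ν / μ ^ 2) • z := by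
  simp only [map_add, map_smul, LinearMap.smul_apply, hzl, hzr, hx, smul_zero, add_zero]
  match_scalars <;> field_simp

theorem sq_add_sq_ne_zero_of_ne_zero {b : Fin 2 → ℝ} (hb : b ≠ 0) : b 0 ^ 2 + b 1 ^ 2 ≠ 0 := by
  intro h
  apply hb
  ext i; fin_cases i <;> simp only [Fin.zero_eta, Fin.mk_one, Fin.isValue, Pi.zero_apply] <;>
    nlinarith [sq_nonneg (b 0), sq_nonneg (b 1)]

namespace GXY

def tensorVec (a : Fin 2 → ℝ) : (Fin 3 → ℝ) →ₗ[ℝ] (Fin 6 → ℝ) where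
  toFun u := ![a 0 * u 0, a 1 * u 0, a 0 * u 1, a 1 * u 1, a 0 * u 2, a 1 * u 2]
  map_add' u v := by ext k; fin_cases k <;> simp <;> ring
  map_smul' c u := by ext k; fin_cases k <;> simp <;> ring

theorem tensorVec_apply (a : Fin 2 → ℝ) (u : Fin 3 → ℝ) :
    tensorVec a u = ![a 0 * u 0, a 1 * u 0, a 0 * u 1, a 1 * u 1, a 0 * u 2, a 1 * u 2] := rfl

theorem eq_zero_of_tensorVec_eq {a b : Fin 2 → ℝ} (h : a 0 * b 1 - a 1 * b 0 ≠ 0)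
    {u v : Fin 3 → ℝ} (huv : tensorVec a u = tensorVec b v) : u = 0 := by
  simp only [tensorVec_apply, funext_iff, Fin.forall_fin_succ, cons_val_zero, cons_val_succ] at huv
  obtain ⟨h0, h1, h2, h3, h4, h5, -⟩ := huv
  ext k
  refine (mul_eq_zero.mp ?_).resolve_left h
  fin_cases k <;> simp only [Fin.zero_eta, Fin.mk_one, Fin.reduceFinMk]
  · linear_combination b 1 * h0 - b 0 * h1
  · linear_combination b 1 * h2 - b 0 * h3
  · linear_combination b 1 * h4 - b 0 * h5

theorem tensorVec_injective {b : Fin 2 → ℝ} (hb : b ≠ 0) : Function.Injective (tensorVec b) := by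
  have h : b 0 * -b 0 - b 1 * b 1 ≠ 0 := by
    have := sq_add_sq_ne_zero_of_ne_zero hb
    contrapose! this; linear_combination -this
  refine (injective_iff_map_eq_zero _).mpr fun v hv =>
    eq_zero_of_tensorVec_eq (b := ![b 1, -b 0]) h (v := 0) ?_
  rw [hv, map_zero]

theorem isCompl_range_tensorVec {a b : Fin 2 → ℝ} (h : a 0 * b 1 - a 1 * b 0 ≠ 0) :
    IsCompl (LinearMap.range (tensorVec a)) (LinearMap.range (tensorVec b)) := by
  refine ⟨Submodule.disjoint_def.mpr ?_, codisjoint_iff.mpr (Submodule.eq_top_iff'.mpr fun w => ?_)⟩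
  · rintro _ ⟨u, rfl⟩ ⟨v, hv⟩
    rw [eq_zero_of_tensorVec_eq h hv.symm, map_zero]
  · set δ := a 0 * b 1 - a 1 * b 0
    refine Submodule.mem_sup.mpr ⟨_, LinearMap.mem_range_self _
      ![(b 1 * w 0 - b 0 * w 1) / δ, (b 1 * w 2 - b 0 * w 3) / δ, (b 1 * w 4 - b 0 * w 5) / δ],
      _, LinearMap.mem_range_self _
      ![(a 0 * w 1 - a 1 * w 0) / δ, (a 0 * w 3 - a 1 * w 2) / δ, (a 0 * w 5 - a 1 * w 4) / δ], ?_⟩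
    ext i; fin_cases i <;> simp [tensorVec] <;> field_simp <;> ring

variable (x : Fin 2 → ℝ) (y : Fin 3 → ℝ)

def mulXY : (Fin 2 → ℝ) →ₗ[ℝ] (Fin 2 → ℝ) →ₗ[ℝ] (Fin 2 → ℝ) :=
  LinearMap.mk₂ ℝ (fun p q => ![
      (x 0 * y 1 - x 1 * y 0) * p 0 * q 0 + x 0 * y 2 * (p 0 * q 1 + p 1 * q 0) +
        x 1 * y 2 * p 1 * q 1,
      -(x 0 * y 0 * p 0 * q 0) - x 1 * y 0 * (p 0 * q 1 + p 1 * q 0) +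
        (x 0 * y 2 - x 1 * y 1) * p 1 * q 1])
    (fun _ _ _ => by ext k; fin_cases k <;> simp <;> ring)
    (fun _ _ _ => by ext k; fin_cases k <;> simp <;> ring)
    (fun _ _ _ => by ext k; fin_cases k <;> simp <;> ring)
    (fun _ _ _ => by ext k; fin_cases k <;> simp <;> ring)

theorem mulXY_comm (a b : Fin 2 → ℝ) : mulXY x y a b = mulXY x y b a := by
  ext k; fin_cases k <;> simp [mulXY] <;> ring

theorem mulXY_perp (b : Fin 2 → ℝ) :
    mulXY x y ![-x 1, x 0] b = (x 1 ^ 2 * y 0 + x 0 ^ 2 * y 2 - x 0 * x 1 * y 1) • b := by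
  ext k; fin_cases k <;> simp [mulXY] <;> ring

theorem mulXY_self :
    mulXY x y x x = (y 1 * (x 0 ^ 2 - x 1 ^ 2) + 2 * x 0 * x 1 * (y 2 - y 0)) • x +
      (-(x 0 ^ 2 * y 0 + x 0 * x 1 * y 1 + x 1 ^ 2 * y 2)) • ![-x 1, x 0] := by
  ext k; fin_cases k <;> simp [mulXY] <;> ring

theorem exists_mulXY_idempotent (hx : x ≠ 0)
    (hR : x 1 ^ 2 * y 0 + x 0 ^ 2 * y 2 - x 0 * x 1 * y 1 = 0)
    (hΔ : y 1 ^ 2 - 4 * y 0 * y 2 ≠ 0) :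
    ∃ d, mulXY x y d d = d ∧ -x 1 * d 1 - x 0 * d 0 ≠ 0 := by
  set μ := y 1 * (x 0 ^ 2 - x 1 ^ 2) + 2 * x 0 * x 1 * (y 2 - y 0)
  have hn := sq_add_sq_ne_zero_of_ne_zero hx
  have hμ : μ ≠ 0 := by
    have hμsq : μ ^ 2 = (x 0 ^ 2 + x 1 ^ 2) ^ 2 * (y 1 ^ 2 - 4 * y 0 * y 2) := by
      linear_combination 4 * (x 0 ^ 2 * y 0 + x 0 * x 1 * y 1 + x 1 ^ 2 * y 2) * hR
    intro h
    exact mul_ne_zero (pow_ne_zero 2 hn) hΔ (by rw [← hμsq, h, zero_pow two_ne_zero])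
  have hzl : mulXY x y ![-x 1, x 0] = 0 := LinearMap.ext fun b => by
    rw [mulXY_perp, hR, zero_smul, LinearMap.zero_apply]
  have hzr : ∀ m, mulXY x y m ![-x 1, x 0] = 0 := fun m => by
    rw [mulXY_comm, hzl, LinearMap.zero_apply]
  refine ⟨_, bilin_idempotent_of_annihilator (mulXY x y) hμ hzl hzr (mulXY_self x y), ?_⟩
  have hdet : ∀ c : ℝ, -x 1 * (μ⁻¹ • x + c • ![-x 1, x 0]) 1 - x 0 * (μ⁻¹ • x + c • ![-x 1, x 0]) 0
      = -(x 0 ^ 2 + x 1 ^ 2) / μ := fun c => by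
    simp only [Pi.add_apply, Pi.smul_apply, smul_eq_mul, cons_val_zero, cons_val_one]
    field_simp
    ring
  rw [hdet]
  exact div_ne_zero (neg_ne_zero.mpr hn) hμ

theorem brXY_tensorVec (a b : Fin 2 → ℝ) (u v : Fin 3 → ℝ) :
    brXY x y (tensorVec a u) (tensorVec b v) = tensorVec (mulXY x y a b) (u ⨯₃ v) := by
  ext k; fin_cases k <;> simp [brXY, Wpair, tensorVec, mulXY, cross_apply] <;> ring

def brXYBilin : (Fin 6 → ℝ) →ₗ[ℝ] (Fin 6 → ℝ) →ₗ[ℝ] (Fin 6 → ℝ) :=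
  LinearMap.mk₂ ℝ (brXY x y)
    (fun _ _ _ => by ext k; fin_cases k <;> simp [brXY, Wpair] <;> ring)
    (fun _ _ _ => by ext k; fin_cases k <;> simp [brXY, Wpair] <;> ring)
    (fun _ _ _ => by ext k; fin_cases k <;> simp [brXY, Wpair] <;> ring)
    (fun _ _ _ => by ext k; fin_cases k <;> simp [brXY, Wpair] <;> ring)

variable {x y} {L : Type*} [LieRing L] [LieAlgebra ℝ L] {e : Module.Basis (Fin 6) ℝ L}

theorem lie_equivFun_symm (he : RealizesGXY x y e) (v w : Fin 6 → ℝ) :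
    ⁅e.equivFun.symm v, e.equivFun.symm w⁆ = e.equivFun.symm (brXY x y v w) := by
  let bracket : L →ₗ[ℝ] L →ₗ[ℝ] L := LinearMap.mk₂ ℝ (⁅·, ·⁆) add_lie smul_lie lie_add lie_smul
  have h : bracket.compl₁₂ e.equivFun.symm.toLinearMap e.equivFun.symm.toLinearMap =
      (brXYBilin x y).compr₂ e.equivFun.symm.toLinearMap := by
    refine LinearMap.ext_basis (Pi.basisFun ℝ _) (Pi.basisFun ℝ _) fun i j => ?_
    simp [bracket, brXYBilin, he i j, Module.Basis.equivFun_symm_apply]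
  exact LinearMap.congr_fun₂ h v w

variable (e) in
def tensorL (a : Fin 2 → ℝ) : (Fin 3 → ℝ) →ₗ[ℝ] L := e.equivFun.symm.toLinearMap ∘ₗ tensorVec a

theorem lie_tensorL (he : RealizesGXY x y e) (a b : Fin 2 → ℝ) (u v : Fin 3 → ℝ) :
    ⁅tensorL e a u, tensorL e b v⁆ = tensorL e (mulXY x y a b) (u ⨯₃ v) := by
  simp only [tensorL, LinearMap.comp_apply, LinearEquiv.coe_coe]
  rw [lie_equivFun_symm he, brXY_tensorVec]

theorem lie_tensorL_perp (he : RealizesGXY x y e)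
    (hR : x 1 ^ 2 * y 0 + x 0 ^ 2 * y 2 - x 0 * x 1 * y 1 = 0) (b : Fin 2 → ℝ) (u v : Fin 3 → ℝ) :
    ⁅tensorL e ![-x 1, x 0] u, tensorL e b v⁆ = 0 := by
  rw [lie_tensorL he, mulXY_perp, hR, zero_smul]
  simp [tensorL, tensorVec_apply, Fin.sum_univ_six]

theorem isCompl_range_tensorL {a b : Fin 2 → ℝ} (h : a 0 * b 1 - a 1 * b 0 ≠ 0) :
    IsCompl (LinearMap.range (tensorL e a)) (LinearMap.range (tensorL e b)) := by
  rw [tensorL, tensorL, LinearMap.range_comp, LinearMap.range_comp]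
  exact (Submodule.orderIsoMapComap e.equivFun.symm).isCompl_iff.mp (isCompl_range_tensorVec h)

theorem tensorL_injective {b : Fin 2 → ℝ} (hb : b ≠ 0) : Function.Injective (tensorL e b) :=
  e.equivFun.symm.injective.comp (tensorVec_injective hb)

end GXY

open GXY in
/-- If `x ≠ 0`, `R(x,y) = 0` and `Δ(y) ≠ 0` then `g(x,y)` is the direct sum of its
3-dimensional center and its derived algebra, the latter being isomorphic to `so(3,ℝ)`. -/
theorem stmt9 (x : Fin 2 → ℝ) (y : Fin 3 → ℝ) (hx : x ≠ 0)
    (hR : x 1 ^ 2 * y 0 + x 0 ^ 2 * y 2 - x 0 * x 1 * y 1 = 0)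
    (hΔ : y 1 ^ 2 - 4 * y 0 * y 2 ≠ 0)
    (L : Type*) [LieRing L] [LieAlgebra ℝ L] (e : Module.Basis (Fin 6) ℝ L)
    (he : RealizesGXY x y e) :
    -- (i) the center is 3-dimensional
    Module.finrank ℝ (LieAlgebra.center ℝ L) = 3 ∧
    -- (ii) the derived algebra is 3-dimensional and isomorphic to `so(3,ℝ)`
    Module.finrank ℝ ↥(⁅(⊤ : LieIdeal ℝ L), (⊤ : LieIdeal ℝ L)⁆ : LieIdeal ℝ L) = 3 ∧
    Nonempty (↥(⁅(⊤ : LieIdeal ℝ L), (⊤ : LieIdeal ℝ L)⁆ : LieIdeal ℝ L) ≃ₗ⁅ℝ⁆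
      LieAlgebra.Orthogonal.so (Fin 3) ℝ) ∧
    -- (iii) `L` is the direct sum of the center and the derived algebra
    LieAlgebra.center ℝ L ⊓ ⁅(⊤ : LieIdeal ℝ L), (⊤ : LieIdeal ℝ L)⁆ = ⊥ ∧
    LieAlgebra.center ℝ L ⊔ ⁅(⊤ : LieIdeal ℝ L), (⊤ : LieIdeal ℝ L)⁆ = ⊤ := by
  obtain ⟨d, hdd, hdet⟩ := exists_mulXY_idempotent x y hx hR hΔ
  set Z := LinearMap.range (tensorL e ![-x 1, x 0])
  set ι := tensorL e d
  have hcompl : IsCompl Z (LinearMap.range ι) := isCompl_range_tensorL hdet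
  have hι : ∀ u v, ⁅ι u, ι v⁆ = ι (u ⨯₃ v) := fun u v => by rw [lie_tensorL he, hdd]
  have hinj : Function.Injective ι := tensorL_injective fun h => hdet (by simp [h])
  have hZ : Z ≤ (center ℝ L).toSubmodule := by
    refine le_center_of_codisjoint hcompl.codisjoint ?_ ?_ <;>
      rintro _ ⟨u, rfl⟩ _ ⟨v, rfl⟩ <;> exact lie_tensorL_perp he hR _ u v
  have hcenter := center_toSubmodule_eq hZ hι hcompl.codisjoint hinj
  have hder := derived_toSubmodule_eq_range hZ hι hcompl.codisjoint
  have hsum : IsCompl (center ℝ L) ⁅(⊤ : LieIdeal ℝ L), ⊤⁆ := by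
    rw [← LieSubmodule.isCompl_toSubmodule, hcenter, hder]; exact hcompl
  have hrankD : Module.finrank ℝ (LinearMap.range ι) = 3 := by
    rw [LinearMap.finrank_range_of_inj hinj, Module.finrank_fin_fun]
  have hrankZ : Module.finrank ℝ Z = 3 := by
    have : FiniteDimensional ℝ L := e.finiteDimensional_of_finite
    have := Submodule.finrank_add_eq_of_isCompl hcompl
    rw [Module.finrank_eq_card_basis e, Fintype.card_fin, hrankD] at this
    omega
  exact ⟨(LinearEquiv.ofEq _ _ hcenter).finrank_eq.trans hrankZ,
    (LinearEquiv.ofEq _ _ hder).finrank_eq.trans hrankD,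
    nonempty_lieEquiv_so_of_range_eq hι hinj _ hder, hsum.inf_eq_bot, hsum.sup_eq_top⟩
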